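/- In the setting H = G ∪ (F ⊛ G^⊤) with F k-uniform, τ(F) = t', G (k+t)-uniform, τ(G) = t, τ(G^⊤) > t+t', and disjoint point sets: if both F and G are closed intersecting families, then H is a closed intersecting family (i.e., H = (H ∪ H^⊤)^⊤). -/
import Mathlib


open Finset

variable {α : Type*} {β : Type*}

/-- `C` is a blocking set of the family `F`: it meets every block of `F`. -/
def IsBlocking (F : Set (Finset α)) (C : Finset α) : Prop :=
  ∀ B ∈ F, ∃ x ∈ B, x ∈ C

/-- The transversal number `τ(F)`: the minimum size of a (finite) blocking set. -/
noncomputable def tau (F : Set (Finset α)) : ℕ :=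
  sInf {n | ∃ C : Finset α, C.card = n ∧ IsBlocking F C}

/-- The family `F^⊤` of transversals, i.e. minimum-size blocking sets of `F`. -/
noncomputable def transversals (F : Set (Finset α)) : Set (Finset α) :=
  {C | IsBlocking F C ∧ C.card = tau F}

/-- A family is intersecting if any two of its blocks meet. -/
def FamIntersecting (F : Set (Finset α)) : Prop :=
  ∀ A ∈ F, ∀ B ∈ F, ∃ x ∈ A, x ∈ B

/-- A family is `k`-uniform if all its blocks have size `k`. -/
def FamUniform (F : Set (Finset α)) (k : ℕ) : Prop :=
  ∀ B ∈ F, B.card = k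

/-- `F` has a finite blocking set (τ(F) < ∞). -/
def HasBlocking (F : Set (Finset α)) : Prop :=
  ∃ C : Finset α, IsBlocking F C

/-- Maximal intersecting family of `k`-sets: uniform, τ < ∞ and `F = F^⊤`. -/
noncomputable def MIF (F : Set (Finset α)) (k : ℕ) : Prop :=
  FamUniform F k ∧ HasBlocking F ∧ F = transversals F

/-- Closed intersecting family `CIF(k,t)`: a `k`-uniform intersecting family with
`τ(F) = t ≤ k - 1` and `F = (F ∪ F^⊤)^⊤`. -/
noncomputable def CIF (F : Set (Finset α)) (k t : ℕ) : Prop :=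
  FamUniform F k ∧ FamIntersecting F ∧ tau F = t ∧ t ≤ k - 1 ∧
    F = transversals (F ∪ transversals F)

/-- The point set of a family. -/
def pts (F : Set (Finset α)) : Set α := ⋃ B ∈ F, (B : Set α)

/-- `G ⊛ H`: all unions `A ∪ B` with `A ∈ G`, `B ∈ H` (for point-disjoint families
these are disjoint unions). -/
def star [DecidableEq α] (G H : Set (Finset α)) : Set (Finset α) :=
  {C | ∃ A ∈ G, ∃ B ∈ H, C = A ∪ B}

lemma tau_le_blocking {F : Set (Finset α)} {C : Finset α} (h : IsBlocking F C) :
    tau F ≤ C.card := Nat.sInf_le ⟨C, rfl, h⟩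

lemma mem_pts {F : Set (Finset α)} {B : Finset α} {x : α} (hB : B ∈ F) (hx : x ∈ B) :
    x ∈ pts F := Set.mem_iUnion₂.2 ⟨B, hB, hx⟩

lemma transversals_nonempty {F : Set (Finset α)} (h : HasBlocking F) :
    ∃ C, C ∈ transversals F := by
  obtain ⟨C, hC⟩ := h
  have hne : {n | ∃ C : Finset α, C.card = n ∧ IsBlocking F C}.Nonempty :=
    ⟨C.card, C, rfl, hC⟩
  obtain ⟨D, hc, hb⟩ := Nat.sInf_mem hne
  exact ⟨D, hb, hc⟩

lemma transversal_subset_pts {F : Set (Finset α)} {C : Finset α}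
    (hC : C ∈ transversals F) : ∀ x ∈ C, x ∈ pts F := by
  classical
  obtain ⟨hblock, hcard⟩ := hC
  by_contra h
  push_neg at h
  obtain ⟨x, hxC, hxp⟩ := h
  set C' := C.filter (fun y => y ∈ pts F) with hC'
  have hsub : C' ⊆ C := Finset.filter_subset _ _
  have hblock' : IsBlocking F C' := by
    intro B hB
    obtain ⟨y, hyB, hyC⟩ := hblock B hB
    exact ⟨y, hyB, Finset.mem_filter.2 ⟨hyC, mem_pts hB hyB⟩⟩
  have h1 : tau F ≤ C'.card := tau_le_blocking hblock'
  have h2 : C'.card < C.card := Finset.card_lt_card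
    ⟨hsub, fun hss => hxp ((Finset.mem_filter.1 (hss hxC)).2)⟩
  omega

lemma tau_cup_eq {K : Set (Finset α)} {k : ℕ} {B : Finset α}
    (hcl : K = transversals (K ∪ transversals K)) (hu : FamUniform K k) (hB : B ∈ K) :
    tau (K ∪ transversals K) = k := by
  have hB' := hB
  rw [hcl] at hB'
  rw [← hB'.2, hu B hB]

theorem stmt_12 [DecidableEq α] (F G : Set (Finset α)) (k t t' : ℕ)
    (hF : CIF F k t') (hG : CIF G (k + t) t)
    (hGT : t + t' < tau (transversals G))
    (hd : Disjoint (pts F) (pts G)) :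
    G ∪ star F (transversals G) =
      transversals ((G ∪ star F (transversals G)) ∪
        transversals (G ∪ star F (transversals G))) := by
  classical
  obtain ⟨hFu, hFi, hFt, hFle, hFcl⟩ := hF
  obtain ⟨hGu, hGi, hGt, hGle, hGcl⟩ := hG
  set H := G ∪ star F (transversals G) with hH
  have hdisj : ∀ x, x ∈ pts F → x ∉ pts G := fun x hx hx' =>
    Set.disjoint_left.1 hd hx hx'
  -- G is nonempty
  have hGne : ∃ B, B ∈ G := by
    by_contra hGe
    push_neg at hGe
    have h0 : (∅ : Finset α) ∈ transversals G := by
      have hbl : IsBlocking G ∅ := fun B hB => absurd hB (hGe B)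
      refine ⟨hbl, ?_⟩
      have := tau_le_blocking hbl
      rw [Finset.card_empty] at this ⊢
      omega
    have hempty : {n | ∃ C : Finset α, C.card = n ∧ IsBlocking (transversals G) C} = ∅ := by
      ext n
      simp only [Set.mem_setOf_eq, Set.mem_empty_iff_false, iff_false, not_exists]
      rintro C ⟨-, hC⟩
      obtain ⟨x, hx, -⟩ := hC ∅ h0
      exact absurd hx (Finset.notMem_empty x)
    have : tau (transversals G) = 0 := by rw [tau, hempty, Nat.sInf_empty]
    omega
  obtain ⟨B₀, hB₀⟩ := hGne
  have hGbl : HasBlocking G := ⟨B₀, fun B hB => hGi B hB B₀ hB₀⟩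
  have hFbl : HasBlocking F := by
    by_cases hFe : ∃ A, A ∈ F
    · obtain ⟨A₀, hA₀⟩ := hFe
      exact ⟨A₀, fun B hB => hFi B hB A₀ hA₀⟩
    · push_neg at hFe
      exact ⟨∅, fun B hB => absurd hB (hFe B)⟩
  obtain ⟨T₀, hT₀⟩ := transversals_nonempty hGbl
  obtain ⟨S₀, hS₀⟩ := transversals_nonempty hFbl
  have hTcard : ∀ T ∈ transversals G, T.card = t := fun T hT => by rw [hT.2, hGt]
  have hScard : ∀ S ∈ transversals F, S.card = t' := fun S hS => by rw [hS.2, hFt]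
  have hdisjFT : ∀ (A T : Finset α), (∀ x ∈ A, x ∈ pts F) → (∀ x ∈ T, x ∈ pts G) →
      Disjoint A T := fun A T hA hT => Finset.disjoint_left.2
    fun {x} hxA hxT => hdisj x (hA x hxA) (hT x hxT)
  -- H is (k+t)-uniform
  have hHu : ∀ B ∈ H, B.card = k + t := by
    rintro B (hB | ⟨A, hA, T, hT, rfl⟩)
    · exact hGu B hB
    · rw [Finset.card_union_of_disjoint
        (hdisjFT A T (fun x hx => mem_pts hA hx) (transversal_subset_pts hT)),
        hFu A hA, hTcard T hT]
  -- H is intersecting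
  have hHi : ∀ B₁ ∈ H, ∀ B₂ ∈ H, ∃ x ∈ B₁, x ∈ B₂ := by
    rintro B₁ (h1 | ⟨A1, hA1, T1, hT1, rfl⟩) B₂ (h2 | ⟨A2, hA2, T2, hT2, rfl⟩)
    · exact hGi B₁ h1 B₂ h2
    · obtain ⟨x, hx1, hx2⟩ := hT2.1 B₁ h1
      exact ⟨x, hx1, Finset.mem_union_right _ hx2⟩
    · obtain ⟨x, hx2, hx1⟩ := hT1.1 B₂ h2
      exact ⟨x, Finset.mem_union_right _ hx1, hx2⟩
    · obtain ⟨x, hx1, hx2⟩ := hFi A1 hA1 A2 hA2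
      exact ⟨x, Finset.mem_union_left _ hx1, Finset.mem_union_left _ hx2⟩
  -- S ∪ T blocks H for S ∈ F^⊤, T ∈ G^⊤
  have hST_block : ∀ S ∈ transversals F, ∀ T ∈ transversals G, IsBlocking H (S ∪ T) := by
    rintro S hS T hT B (hB | ⟨A, hA, T', hT', rfl⟩)
    · obtain ⟨x, hx, hx'⟩ := hT.1 B hB
      exact ⟨x, hx, Finset.mem_union_right _ hx'⟩
    · obtain ⟨x, hx, hx'⟩ := hS.1 A hA
      exact ⟨x, Finset.mem_union_left _ hx, Finset.mem_union_left _ hx'⟩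
  have hSTcard : ∀ S ∈ transversals F, ∀ T ∈ transversals G, (S ∪ T).card = t' + t := by
    intro S hS T hT
    rw [Finset.card_union_of_disjoint
      (hdisjFT S T (transversal_subset_pts hS) (transversal_subset_pts hT)),
      hScard S hS, hTcard T hT]
  -- lower bound on blockers of H
  have hHlow : ∀ C : Finset α, IsBlocking H C → t + t' ≤ C.card := by
    intro C hC
    by_cases hbf : ∀ A ∈ F, ∃ x ∈ A, x ∈ C
    · set CF := C.filter (fun x => x ∈ pts F) with hCF
      set CG := C.filter (fun x => x ∈ pts G) with hCG
      have h1 : IsBlocking F CF := by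
        intro A hA
        obtain ⟨x, hx, hx'⟩ := hbf A hA
        exact ⟨x, hx, Finset.mem_filter.2 ⟨hx', mem_pts hA hx⟩⟩
      have h2 : IsBlocking G CG := by
        intro B hB
        obtain ⟨x, hx, hx'⟩ := hC B (Set.mem_union_left _ hB)
        exact ⟨x, hx, Finset.mem_filter.2 ⟨hx', mem_pts hB hx⟩⟩
      have c1 : t' ≤ CF.card := by rw [← hFt]; exact tau_le_blocking h1
      have c2 : t ≤ CG.card := by rw [← hGt]; exact tau_le_blocking h2
      have hdCFG : Disjoint CF CG := Finset.disjoint_left.2 fun {x} hx1 hx2 =>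
        hdisj x (Finset.mem_filter.1 hx1).2 (Finset.mem_filter.1 hx2).2
      have hsum : CF.card + CG.card ≤ C.card := by
        rw [← Finset.card_union_of_disjoint hdCFG]
        exact Finset.card_le_card
          (Finset.union_subset (Finset.filter_subset _ _) (Finset.filter_subset _ _))
      omega
    · push_neg at hbf
      obtain ⟨A, hA, hAC⟩ := hbf
      have hblk : IsBlocking (transversals G) C := by
        intro T hT
        obtain ⟨x, hx, hx'⟩ := hC (A ∪ T) (Set.mem_union_right _ ⟨A, hA, T, hT, rfl⟩)
        rcases Finset.mem_union.1 hx with h | h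
        · exact absurd hx' (hAC x h)
        · exact ⟨x, h, hx'⟩
      have := tau_le_blocking hblk
      omega
  have hHbl : HasBlocking H := ⟨S₀ ∪ T₀, hST_block S₀ hS₀ T₀ hT₀⟩
  have htauH : tau H = t + t' := by
    have hle : tau H ≤ t' + t := by
      have := tau_le_blocking (hST_block S₀ hS₀ T₀ hT₀)
      rwa [hSTcard S₀ hS₀ T₀ hT₀] at this
    obtain ⟨C, hCb, hCc⟩ := transversals_nonempty hHbl
    have := hHlow C hCb
    omega
  -- transversals of H contain all S ∪ T
  have htrH : ∀ S ∈ transversals F, ∀ T ∈ transversals G, S ∪ T ∈ transversals H := by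
    intro S hS T hT
    exact ⟨hST_block S hS T hT, by rw [hSTcard S hS T hT, htauH, Nat.add_comm]⟩
  -- key characterization of small blockers of H ∪ H^⊤
  have key : ∀ D : Finset α, IsBlocking (H ∪ transversals H) D → D.card ≤ k + t →
      D ∈ H ∧ D.card = k + t := by
    intro D hD hDle
    set DG := D.filter (fun x => x ∈ pts G) with hDGdef
    set DF := D.filter (fun x => x ∈ pts F) with hDFdef
    have hDG : IsBlocking G DG := by
      intro B hB
      obtain ⟨x, hx, hx'⟩ := hD B (Set.mem_union_left _ (Set.mem_union_left _ hB))
      exact ⟨x, hx, Finset.mem_filter.2 ⟨hx', mem_pts hB hx⟩⟩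
    by_cases hT : ∀ T ∈ transversals G, ∃ x ∈ T, x ∈ D
    · have hblk : IsBlocking (G ∪ transversals G) DG := by
        rintro B (hB | hB)
        · exact hDG B hB
        · obtain ⟨x, hx, hx'⟩ := hT B hB
          exact ⟨x, hx, Finset.mem_filter.2 ⟨hx', transversal_subset_pts hB x hx⟩⟩
      have htg : tau (G ∪ transversals G) = k + t := tau_cup_eq hGcl hGu hB₀
      have h1 : k + t ≤ DG.card := by rw [← htg]; exact tau_le_blocking hblk
      have h2 : DG.card ≤ D.card := Finset.card_le_card (Finset.filter_subset _ _)
      have hcard : D.card = k + t := by omega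
      have hDGeq : DG = D := Finset.eq_of_subset_of_card_le
        (Finset.filter_subset _ _) (by omega)
      rw [hDGeq] at hblk
      have hmem : D ∈ transversals (G ∪ transversals G) :=
        ⟨hblk, by rw [hcard, htg]⟩
      rw [← hGcl] at hmem
      exact ⟨Set.mem_union_left _ hmem, hcard⟩
    · push_neg at hT
      obtain ⟨T, hTtr, hTD⟩ := hT
      have hmeetS : ∀ S ∈ transversals F, ∃ x ∈ S, x ∈ D := by
        intro S hS
        obtain ⟨x, hx, hx'⟩ := hD (S ∪ T) (Set.mem_union_right _ (htrH S hS T hTtr))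
        rcases Finset.mem_union.1 hx with h | h
        · exact ⟨x, h, hx'⟩
        · exact absurd hx' (hTD x h)
      have hmeetA : ∀ A ∈ F, ∃ x ∈ A, x ∈ D := by
        intro A hA
        obtain ⟨x, hx, hx'⟩ := hD (A ∪ T)
          (Set.mem_union_left _ (Set.mem_union_right _ ⟨A, hA, T, hTtr, rfl⟩))
        rcases Finset.mem_union.1 hx with h | h
        · exact ⟨x, h, hx'⟩
        · exact absurd hx' (hTD x h)
      by_cases hFe : ∀ A, A ∉ F
      · exfalso
        have h0 : (∅ : Finset α) ∈ transversals F := by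
          have hbl : IsBlocking F ∅ := fun B hB => absurd hB (hFe B)
          refine ⟨hbl, ?_⟩
          have := tau_le_blocking hbl
          rw [Finset.card_empty] at this ⊢
          omega
        obtain ⟨x, hx, -⟩ := hmeetS ∅ h0
        exact absurd hx (Finset.notMem_empty x)
      · push_neg at hFe
        obtain ⟨A₀, hA₀⟩ := hFe
        have hDF : IsBlocking (F ∪ transversals F) DF := by
          rintro B (hB | hB)
          · obtain ⟨x, hx, hx'⟩ := hmeetA B hB
            exact ⟨x, hx, Finset.mem_filter.2 ⟨hx', mem_pts hB hx⟩⟩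
          · obtain ⟨x, hx, hx'⟩ := hmeetS B hB
            exact ⟨x, hx, Finset.mem_filter.2 ⟨hx', transversal_subset_pts hB x hx⟩⟩
        have htf : tau (F ∪ transversals F) = k := tau_cup_eq hFcl hFu hA₀
        have c1 : k ≤ DF.card := by rw [← htf]; exact tau_le_blocking hDF
        have c2 : t ≤ DG.card := by rw [← hGt]; exact tau_le_blocking hDG
        have hdisjDFG : Disjoint DF DG := Finset.disjoint_left.2 fun {x} h1 h2 =>
          hdisj x (Finset.mem_filter.1 h1).2 (Finset.mem_filter.1 h2).2
        have hsub : DF ∪ DG ⊆ D :=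
          Finset.union_subset (Finset.filter_subset _ _) (Finset.filter_subset _ _)
        have hucard : (DF ∪ DG).card = DF.card + DG.card :=
          Finset.card_union_of_disjoint hdisjDFG
        have hle2 : (DF ∪ DG).card ≤ D.card := Finset.card_le_card hsub
        have hcard : D.card = k + t := by omega
        have hDeq : D = DF ∪ DG :=
          (Finset.eq_of_subset_of_card_le hsub (by omega)).symm
        have hDFcard : DF.card = k := by omega
        have hDGcard : DG.card = t := by omega
        have hDFm : DF ∈ F := by
          rw [hFcl]; exact ⟨hDF, by rw [hDFcard, htf]⟩
        have hDGm : DG ∈ transversals G := ⟨hDG, by rw [hDGcard, hGt]⟩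
        exact ⟨Set.mem_union_right _ ⟨DF, hDFm, DG, hDGm, hDeq⟩, hcard⟩
  -- every member of H blocks H ∪ H^⊤
  have hHblk : ∀ D ∈ H, IsBlocking (H ∪ transversals H) D := by
    intro D hDH
    rintro B (hB | hB)
    · exact hHi B hB D hDH
    · obtain ⟨x, h1, h2⟩ := hB.1 D hDH
      exact ⟨x, h2, h1⟩
  have htauHH : tau (H ∪ transversals H) = k + t := by
    have hle : tau (H ∪ transversals H) ≤ k + t := by
      have := tau_le_blocking (hHblk B₀ (Set.mem_union_left _ hB₀))
      rwa [hGu B₀ hB₀] at this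
    obtain ⟨C, hCb, hCc⟩ := transversals_nonempty
      ⟨B₀, hHblk B₀ (Set.mem_union_left _ hB₀)⟩
    have hck : C.card ≤ k + t := by omega
    have := (key C hCb hck).2
    omega
  ext D
  constructor
  · intro hDH
    exact ⟨hHblk D hDH, by rw [hHu D hDH, htauHH]⟩
  · intro hDt
    exact (key D hDt.1 (le_of_eq (by rw [hDt.2, htauHH]))).1
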